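/- For all nonnegative integers n and l, Σ_{k=0}^{n} b(n,k) · B(k,l) = δ_{n,l}. -/

import Mathlib

set_option linter.unusedSectionVars false

/-- `besselB n k` is the number of set partitions of `[n]` into `k` blocks,
each of size one or two (the Bessel number of the second kind). -/
noncomputable def besselB (n k : ℕ) : ℕ :=
  Nat.card {P : Finset (Finset (Fin n)) //
    (∀ b ∈ P, b.card = 1 ∨ b.card = 2) ∧
    (∀ i : Fin n, ∃! b, b ∈ P ∧ i ∈ b) ∧
    P.card = k}

/-- The signless Bessel number of the first kind `a(n,k)`. -/
def aQ (n k : ℕ) : ℚ :=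
  (Nat.factorial (2 * n - k - 1) : ℚ) /
    (2 ^ (n - k) * Nat.factorial (n - k) * Nat.factorial (k - 1))

/-- The Bessel number of the first kind `b(n,k)`. -/
def besselb (n k : ℕ) : ℚ :=
  if n = 0 ∧ k = 0 then 1
  else if 1 ≤ k ∧ k ≤ n then (-1) ^ (n - k) * aQ n k
  else 0

section BQ
variable {α : Type*} [DecidableEq α]

def Good (s : Finset α) (P : Finset (Finset α)) : Prop :=
  (∀ b ∈ P, b.card = 1 ∨ b.card = 2) ∧ (∀ i ∈ s, ∃! b, b ∈ P ∧ i ∈ b) ∧ ∀ b ∈ P, b ⊆ s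

noncomputable def BQ (s : Finset α) (k : ℕ) : ℕ :=
  Nat.card {P : Finset (Finset α) // Good s P ∧ P.card = k}

lemma nat_card_split {γ : Type*} [Finite γ] (p : γ → Prop) :
    Nat.card γ = Nat.card {x // p x} + Nat.card {x // ¬ p x} := by
  classical
  rw [← Nat.card_sum]
  exact Nat.card_congr (Equiv.sumCompl p).symm

lemma nat_card_sigma {ι : Type*} [Fintype ι] (T : ι → Type*) [∀ i, Finite (T i)] :
    Nat.card (Σ i, T i) = ∑ i, Nat.card (T i) := by
  letI : ∀ i, Fintype (T i) := fun i => Fintype.ofFinite _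
  simp [Nat.card_eq_fintype_card]

/-- Removing a prescribed block `b0` gives a bijection. -/
lemma good_block_card [Fintype α] {s b0 : Finset α}
    (hb0card : b0.card = 1 ∨ b0.card = 2) (hb0s : b0 ⊆ s) (hb0ne : b0.Nonempty) (l : ℕ) :
    Nat.card {P : Finset (Finset α) // (Good s P ∧ P.card = l + 1) ∧ b0 ∈ P}
      = BQ (s \ b0) l := by
  symm
  apply Nat.card_congr
  have hb0nm : ∀ Q : Finset (Finset α), (∀ b ∈ Q, b ⊆ s \ b0) → b0 ∉ Q := by
    intro Q hQ hb0
    obtain ⟨x, hx⟩ := hb0ne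
    exact (Finset.mem_sdiff.mp (hQ b0 hb0 hx)).2 hx
  refine Equiv.ofBijective
    (fun Q => ⟨insert b0 Q.val, ⟨⟨?_, ?_, ?_⟩, ?_⟩, Finset.mem_insert_self _ _⟩) ⟨?_, ?_⟩
  · obtain ⟨Q, ⟨h1, h2, h3⟩, hk⟩ := Q
    intro b hb
    rcases Finset.mem_insert.mp hb with rfl | hb
    · exact hb0card
    · exact h1 b hb
  · obtain ⟨Q, ⟨h1, h2, h3⟩, hk⟩ := Q
    intro i hi
    by_cases hib : i ∈ b0
    · refine ⟨b0, ⟨Finset.mem_insert_self _ _, hib⟩, ?_⟩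
      rintro b ⟨hb, hib'⟩
      rcases Finset.mem_insert.mp hb with rfl | hb
      · rfl
      · exact absurd hib (Finset.mem_sdiff.mp (h3 b hb hib')).2
    · obtain ⟨q, ⟨hqQ, hiq⟩, hu⟩ := h2 i (Finset.mem_sdiff.mpr ⟨hi, hib⟩)
      refine ⟨q, ⟨Finset.mem_insert_of_mem hqQ, hiq⟩, ?_⟩
      rintro b ⟨hb, hib'⟩
      rcases Finset.mem_insert.mp hb with rfl | hb
      · exact absurd hib' hib
      · exact hu b ⟨hb, hib'⟩
  · obtain ⟨Q, ⟨h1, h2, h3⟩, hk⟩ := Q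
    intro b hb
    rcases Finset.mem_insert.mp hb with rfl | hb
    · exact hb0s
    · exact (h3 b hb).trans (Finset.sdiff_subset)
  · obtain ⟨Q, ⟨h1, h2, h3⟩, hk⟩ := Q
    rw [Finset.card_insert_of_notMem (hb0nm Q h3), hk]
  · rintro ⟨Q, hQ⟩ ⟨Q', hQ'⟩ h
    simp only [Subtype.mk.injEq] at h ⊢
    have h0 : b0 ∉ Q := hb0nm Q hQ.1.2.2
    have h0' : b0 ∉ Q' := hb0nm Q' hQ'.1.2.2
    rw [← Finset.erase_insert h0, ← Finset.erase_insert h0', h]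
  · rintro ⟨P, ⟨⟨h1, h2, h3⟩, hk⟩, hb0⟩
    have hQgood : Good (s \ b0) (P.erase b0) ∧ (P.erase b0).card = l := by
      refine ⟨⟨?_, ?_, ?_⟩, ?_⟩
      · intro b hb; exact h1 b (Finset.mem_of_mem_erase hb)
      · intro i hi
        obtain ⟨his, hib⟩ := Finset.mem_sdiff.mp hi
        obtain ⟨b, ⟨hbP, hib'⟩, hu⟩ := h2 i his
        have hbne : b ≠ b0 := fun h => hib (h ▸ hib')
        refine ⟨b, ⟨Finset.mem_erase.mpr ⟨hbne, hbP⟩, hib'⟩, ?_⟩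
        rintro c ⟨hc, hic⟩
        exact hu c ⟨Finset.mem_of_mem_erase hc, hic⟩
      · intro b hb
        obtain ⟨hbne, hbP⟩ := Finset.mem_erase.mp hb
        intro x hx
        refine Finset.mem_sdiff.mpr ⟨h3 b hbP hx, fun hxb0 => ?_⟩
        obtain ⟨c, -, hu⟩ := h2 x (h3 b hbP hx)
        exact hbne ((hu b ⟨hbP, hx⟩).trans (hu b0 ⟨hb0, hxb0⟩).symm)
      · rw [Finset.card_erase_of_mem hb0, hk]
        rfl
    refine ⟨⟨P.erase b0, hQgood⟩, ?_⟩
    simp only [Subtype.mk.injEq]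
    exact Finset.insert_erase hb0
end BQ

section BQ2
variable {α : Type*} [DecidableEq α]

lemma pair_card [Fintype α] {s : Finset α} {i0 : α} (hi0 : i0 ∈ s) (l : ℕ) :
    Nat.card {P : Finset (Finset α) // (Good s P ∧ P.card = l + 1) ∧ ({i0} : Finset α) ∉ P}
      = ∑ j ∈ s.erase i0, BQ (s \ {j, i0}) l := by
  have key : Nat.card {P : Finset (Finset α) // (Good s P ∧ P.card = l + 1) ∧ ({i0} : Finset α) ∉ P}
      = Nat.card (Σ j : {j : α // j ∈ s.erase i0},
          {P : Finset (Finset α) // (Good s P ∧ P.card = l + 1) ∧ ({j.val, i0} : Finset α) ∈ P}) := by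
    symm
    apply Nat.card_congr
    refine Equiv.ofBijective (fun x => ⟨x.2.val, x.2.prop.1, ?_⟩) ⟨?_, ?_⟩
    · obtain ⟨⟨j, hj⟩, ⟨P, ⟨⟨h1, h2, h3⟩, hk⟩, hpair⟩⟩ := x
      intro hsing
      obtain ⟨hjne, hjs⟩ := Finset.mem_erase.mp hj
      obtain ⟨b, hb, hu⟩ := h2 i0 hi0
      have e1 := hu ({j, i0} : Finset α) ⟨hpair, by simp⟩
      have e2 := hu ({i0} : Finset α) ⟨hsing, by simp⟩
      rw [← e2] at e1
      have : j ∈ ({i0} : Finset α) := e1 ▸ Finset.mem_insert_self j {i0}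
      exact hjne (Finset.mem_singleton.mp this)
    · rintro ⟨⟨j, hj⟩, ⟨P, hP⟩⟩ ⟨⟨j', hj'⟩, ⟨P', hP'⟩⟩ h
      simp only [Subtype.mk.injEq] at h
      have hPP : P = P' := h
      subst hPP
      obtain ⟨⟨h1, h2, h3⟩, hk⟩ := hP.1
      obtain ⟨b, hb, hu⟩ := h2 i0 hi0
      have e1 := hu ({j, i0} : Finset α) ⟨hP.2, by simp⟩
      have e2 := hu ({j', i0} : Finset α) ⟨hP'.2, by simp⟩
      rw [← e2] at e1
      have hjj : j = j' := by
        have : j ∈ ({j', i0} : Finset α) := e1 ▸ Finset.mem_insert_self j {i0}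
        rcases Finset.mem_insert.mp this with h' | h'
        · exact h'
        · exact absurd (Finset.mem_singleton.mp h') (Finset.mem_erase.mp hj).1
      subst hjj
      rfl
    · rintro ⟨P, ⟨⟨h1, h2, h3⟩, hk⟩, hns⟩
      obtain ⟨b, ⟨hbP, hib⟩, hu⟩ := h2 i0 hi0
      rcases h1 b hbP with hcard | hcard
      · obtain ⟨a, rfl⟩ := Finset.card_eq_one.mp hcard
        obtain rfl := Finset.mem_singleton.mp hib
        exact absurd hbP hns
      · obtain ⟨x, y, hxy, rfl⟩ := Finset.card_eq_two.mp hcard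
        rcases Finset.mem_insert.mp hib with rfl | hy
        · -- i0 = x, partner y
          refine ⟨⟨⟨y, Finset.mem_erase.mpr ⟨fun h => hxy h.symm, h3 _ hbP (by simp)⟩⟩,
            ⟨P, ⟨⟨h1, h2, h3⟩, hk⟩, ?_⟩⟩, rfl⟩
          rwa [Finset.pair_comm]
        · obtain rfl := Finset.mem_singleton.mp hy
          exact ⟨⟨⟨x, Finset.mem_erase.mpr ⟨hxy, h3 _ hbP (by simp)⟩⟩,
            ⟨P, ⟨⟨h1, h2, h3⟩, hk⟩, hbP⟩⟩, rfl⟩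
  rw [key, nat_card_sigma]
  rw [← Finset.sum_coe_sort (s.erase i0) (fun j => BQ (s \ {j, i0}) l)]
  apply Finset.sum_congr rfl
  intro j _
  have hjne : j.val ≠ i0 := (Finset.mem_erase.mp j.prop).1
  have hjs : j.val ∈ s := (Finset.mem_erase.mp j.prop).2
  apply good_block_card
  · right
    rw [Finset.card_insert_of_notMem (by simpa using hjne), Finset.card_singleton]
  · intro x hx
    rcases Finset.mem_insert.mp hx with rfl | hx
    · exact hjs
    · rwa [Finset.mem_singleton.mp hx]
  · exact ⟨i0, by simp⟩
end BQ2

section BQ3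
variable {α : Type*} [DecidableEq α] {β : Type*} [DecidableEq β]

lemma besselB_eq_BQ (n k : ℕ) : besselB n k = BQ (Finset.univ : Finset (Fin n)) k := by
  apply Nat.card_congr
  apply Equiv.subtypeEquivRight
  intro P
  constructor
  · rintro ⟨h1, h2, h3⟩
    exact ⟨⟨h1, fun i _ => h2 i, fun b _ => b.subset_univ⟩, h3⟩
  · rintro ⟨⟨h1, h2, _⟩, h3⟩
    exact ⟨h1, fun i => h2 i (Finset.mem_univ i), h3⟩


lemma map_preimage_of_subset (f : α ↪ β) {q : Finset β} {s : Finset α} (h : q ⊆ s.map f) :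
    (q.preimage f f.injective.injOn).map f = q := by
  ext x
  simp only [Finset.mem_map, Finset.mem_preimage]
  constructor
  · rintro ⟨a, ha, rfl⟩; exact ha
  · intro hx
    obtain ⟨a, _, rfl⟩ := Finset.mem_map.mp (h hx)
    exact ⟨a, hx, rfl⟩

lemma BQ_map (f : α ↪ β) (s : Finset α) (k : ℕ) : BQ (s.map f) k = BQ s k := by
  symm
  apply Nat.card_congr
  refine Equiv.ofBijective (fun P => ⟨P.val.image (fun b => b.map f), ?_, ?_⟩) ⟨?_, ?_⟩
  · obtain ⟨P, ⟨h1, h2, h3⟩, hk⟩ := P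
    refine ⟨?_, ?_, ?_⟩
    · rintro c hc
      obtain ⟨b, hb, rfl⟩ := Finset.mem_image.mp hc
      simpa using h1 b hb
    · rintro i hi
      obtain ⟨j, hj, rfl⟩ := Finset.mem_map.mp hi
      obtain ⟨b, ⟨hbP, hjb⟩, hu⟩ := h2 j hj
      refine ⟨b.map f, ⟨Finset.mem_image_of_mem _ hbP, Finset.mem_map_of_mem f hjb⟩, ?_⟩
      rintro c ⟨hc, hjc⟩
      obtain ⟨b', hb', rfl⟩ := Finset.mem_image.mp hc
      obtain ⟨a, ha, hfa⟩ := Finset.mem_map.mp hjc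
      cases f.injective hfa
      rw [hu b' ⟨hb', ha⟩]
    · rintro c hc
      obtain ⟨b, hb, rfl⟩ := Finset.mem_image.mp hc
      exact Finset.map_subset_map.mpr (h3 b hb)
  · obtain ⟨P, ⟨h1, h2, h3⟩, hk⟩ := P
    show (Finset.image _ P).card = k
    rw [Finset.card_image_of_injOn (fun b _ b' _ h => Finset.map_injective f h)]
    exact hk
  · rintro ⟨P, hP⟩ ⟨P', hP'⟩ h
    simp only [Subtype.mk.injEq] at h ⊢
    exact Finset.image_injective (Finset.map_injective f) h
  · rintro ⟨Q, ⟨g1, g2, g3⟩, gk⟩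
    have hpre : ∀ q ∈ Q, (q.preimage f f.injective.injOn).map f = q :=
      fun q hq => map_preimage_of_subset f (g3 q hq)
    refine ⟨⟨Q.image (fun q => q.preimage f f.injective.injOn), ⟨?_, ?_, ?_⟩, ?_⟩, ?_⟩
    · rintro b hb
      obtain ⟨q, hq, rfl⟩ := Finset.mem_image.mp hb
      have : (q.preimage f f.injective.injOn).card = q.card := by
        calc (q.preimage f f.injective.injOn).card
            = ((q.preimage f f.injective.injOn).map f).card := (Finset.card_map f).symm
          _ = q.card := by rw [hpre q hq]
      rw [this]; exact g1 q hq
    · rintro i hi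
      obtain ⟨q, ⟨hqQ, hiq⟩, hu⟩ := g2 (f i) (Finset.mem_map_of_mem f hi)
      refine ⟨q.preimage f f.injective.injOn, ⟨Finset.mem_image_of_mem _ hqQ, Finset.mem_preimage.mpr hiq⟩, ?_⟩
      rintro b ⟨hb, hib⟩
      obtain ⟨q', hq', rfl⟩ := Finset.mem_image.mp hb
      rw [hu q' ⟨hq', Finset.mem_preimage.mp hib⟩]
    · rintro b hb
      obtain ⟨q, hq, rfl⟩ := Finset.mem_image.mp hb
      intro a ha
      have : f a ∈ s.map f := g3 q hq (Finset.mem_preimage.mp ha)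
      obtain ⟨j, hj, hfj⟩ := Finset.mem_map.mp this
      cases f.injective hfj
      exact hj
    · rw [← gk]
      apply Finset.card_image_of_injOn
      intro q1 hq1 q2 hq2 h
      have h' : q1.preimage f f.injective.injOn = q2.preimage f f.injective.injOn := h
      rw [← hpre q1 (Finset.mem_coe.mp hq1), ← hpre q2 (Finset.mem_coe.mp hq2), h']
    · ext c
      simp only [Finset.image_image]
      constructor
      · intro hc
        obtain ⟨q, hq, rfl⟩ := Finset.mem_image.mp hc
        rw [Function.comp_apply, hpre q hq]; exact hq
      · intro hc
        exact Finset.mem_image.mpr ⟨c, hc, by rw [Function.comp_apply, hpre c hc]⟩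

end BQ3

lemma BQ_card {N : ℕ} (s : Finset (Fin N)) (k : ℕ) : BQ s k = besselB s.card k := by
  set m := s.card with hm
  have f : Fin m ↪o Fin N := s.orderEmbOfFin hm.symm
  have hmap : (Finset.univ : Finset (Fin m)).map (s.orderEmbOfFin hm.symm).toEmbedding = s := by
    ext x
    simp only [Finset.mem_map, Finset.mem_univ, true_and]
    constructor
    · rintro ⟨i, rfl⟩; exact s.orderEmbOfFin_mem hm.symm i
    · intro hx
      have : x ∈ Set.range (s.orderEmbOfFin hm.symm) := by
        rw [Finset.range_orderEmbOfFin]; exact hx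
      obtain ⟨i, hi⟩ := this
      exact ⟨i, hi⟩
  rw [besselB_eq_BQ, ← hmap, BQ_map]



lemma besselB_rec (m l : ℕ) :
    besselB (m + 1) (l + 1) = besselB m l + m * besselB (m - 1) l := by
  classical
  set i0 : Fin (m + 1) := Fin.last m with hi0def
  rw [besselB_eq_BQ, BQ,
    nat_card_split (fun P : {P : Finset (Finset (Fin (m+1))) //
      Good Finset.univ P ∧ P.card = l + 1} => ({i0} : Finset (Fin (m+1))) ∈ P.val)]
  have flat1 : Nat.card {P : {P : Finset (Finset (Fin (m+1))) //
        Good Finset.univ P ∧ P.card = l + 1} // ({i0} : Finset (Fin (m+1))) ∈ P.val}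
      = Nat.card {P : Finset (Finset (Fin (m+1))) //
        (Good Finset.univ P ∧ P.card = l + 1) ∧ ({i0} : Finset (Fin (m+1))) ∈ P} :=
    Nat.card_congr (Equiv.subtypeSubtypeEquivSubtypeInter
      (fun P => Good Finset.univ P ∧ P.card = l + 1)
      (fun P => ({i0} : Finset (Fin (m+1))) ∈ P))
  have flat2 : Nat.card {P : {P : Finset (Finset (Fin (m+1))) //
        Good Finset.univ P ∧ P.card = l + 1} // ¬ ({i0} : Finset (Fin (m+1))) ∈ P.val}
      = Nat.card {P : Finset (Finset (Fin (m+1))) //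
        (Good Finset.univ P ∧ P.card = l + 1) ∧ ({i0} : Finset (Fin (m+1))) ∉ P} :=
    Nat.card_congr (Equiv.subtypeSubtypeEquivSubtypeInter
      (fun P => Good Finset.univ P ∧ P.card = l + 1)
      (fun P => ({i0} : Finset (Fin (m+1))) ∉ P))
  rw [flat1, flat2]
  have h1 : Nat.card {P : Finset (Finset (Fin (m+1))) //
        (Good Finset.univ P ∧ P.card = l + 1) ∧ ({i0} : Finset (Fin (m+1))) ∈ P}
      = besselB m l := by
    rw [good_block_card (Or.inl (Finset.card_singleton i0)) (Finset.subset_univ _)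
      (Finset.singleton_nonempty i0), BQ_card]
    congr 1
    rw [Finset.card_sdiff_of_subset (Finset.subset_univ _), Finset.card_singleton, Finset.card_univ,
      Fintype.card_fin]
    omega
  have h2 : Nat.card {P : Finset (Finset (Fin (m+1))) //
        (Good Finset.univ P ∧ P.card = l + 1) ∧ ({i0} : Finset (Fin (m+1))) ∉ P}
      = m * besselB (m - 1) l := by
    rw [pair_card (Finset.mem_univ i0)]
    have : ∀ j ∈ Finset.univ.erase i0, BQ (Finset.univ \ {j, i0} : Finset (Fin (m+1))) l
        = besselB (m - 1) l := by
      intro j hj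
      have hjne : j ≠ i0 := (Finset.mem_erase.mp hj).1
      rw [BQ_card]
      congr 1
      rw [Finset.card_sdiff_of_subset (Finset.subset_univ _), Finset.card_univ, Fintype.card_fin,
        Finset.card_insert_of_notMem (by simpa using hjne), Finset.card_singleton]
      omega
    rw [Finset.sum_congr rfl this, Finset.sum_const, Finset.card_erase_of_mem (Finset.mem_univ i0),
      Finset.card_univ, Fintype.card_fin, smul_eq_mul]
    rfl
  rw [h1, h2]


lemma besselb_of_le {n k : ℕ} (h1 : 1 ≤ k) (h2 : k ≤ n) :
    besselb n k = (-1) ^ (n - k) *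
      ((Nat.factorial (2 * n - k - 1) : ℚ) /
        (2 ^ (n - k) * Nat.factorial (n - k) * Nat.factorial (k - 1))) := by
  rw [besselb, if_neg (by omega), if_pos ⟨h1, h2⟩, aQ]

lemma besselb_of_gt {n k : ℕ} (h : n < k) : besselb n k = 0 := by
  rw [besselb, if_neg (by omega), if_neg (by omega)]

lemma besselb_zero_right {n : ℕ} (h : n ≠ 0) : besselb n 0 = 0 := by
  rw [besselb, if_neg (by omega), if_neg (by omega)]

lemma besselb_rec (n j : ℕ) :
    besselb (n + 1) (j + 1) + (j + 1) * besselb (n + 1) (j + 2) = besselb n j := by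
  rcases lt_or_ge n j with h | h
  · -- j > n : everything is 0
    rw [besselb_of_gt (by omega), besselb_of_gt (by omega), besselb_of_gt (by omega)]
    ring
  rcases eq_or_lt_of_le h with rfl | hlt
  · -- j = n
    rw [besselb_of_le (by omega) (by omega), besselb_of_gt (by omega)]
    have h1 : j + 1 - (j + 1) = 0 := by omega
    have h2 : 2 * (j + 1) - (j + 1) - 1 = j := by omega
    have h3 : (j + 1) - 1 = j := by omega
    rw [h1, h2, h3]
    rcases Nat.eq_zero_or_pos j with rfl | hj
    · norm_num [besselb]
    · obtain ⟨i, rfl⟩ : ∃ i, j = i + 1 := ⟨j - 1, by omega⟩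
      rw [besselb_of_le (by omega) le_rfl]
      have h4 : i + 1 - (i + 1) = 0 := by omega
      have h5 : 2 * (i + 1) - (i + 1) - 1 = i := by omega
      have h6 : i + 1 - 1 = i := by omega
      rw [h4, h5, h6]
      have hi : (i.factorial : ℚ) ≠ 0 := Nat.cast_ne_zero.mpr (Nat.factorial_ne_zero _)
      have hj' : ((i + 1).factorial : ℚ) = (i + 1) * i.factorial := by
        rw [Nat.factorial_succ]; push_cast; ring
      rw [hj']
      field_simp
      simp
  · -- 1 + j ≤ n. Set d := n - j - 1
    obtain ⟨d, rfl⟩ : ∃ d, n = j + d + 1 := ⟨n - j - 1, by omega⟩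
    rcases Nat.eq_zero_or_pos j with rfl | hj
    · -- j = 0, n = d + 1 ≥ 1
      rw [besselb_of_le (by omega) (by omega), besselb_of_le (by omega) (by omega),
        besselb_zero_right (by omega)]
      have e1 : 0 + d + 1 + 1 - (0 + 1) = d + 1 := by omega
      have e2 : 2 * (0 + d + 1 + 1) - (0 + 1) - 1 = 2 * d + 2 := by omega
      have e3 : (0:ℕ) + 1 - 1 = 0 := by omega
      have e4 : 0 + d + 1 + 1 - (0 + 2) = d := by omega
      have e5 : 2 * (0 + d + 1 + 1) - (0 + 2) - 1 = 2 * d + 1 := by omega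
      have e6 : (0:ℕ) + 2 - 1 = 1 := by omega
      rw [e1, e2, e3, e4, e5, e6]
      have f1 : ((2 * d + 2).factorial : ℚ) = (2 * d + 2) * (2 * d + 1).factorial := by
        rw [Nat.factorial_succ]; push_cast; ring
      have f2 : ((d + 1).factorial : ℚ) = (d + 1) * d.factorial := by
        rw [Nat.factorial_succ]; push_cast; ring
      have hd : (d.factorial : ℚ) ≠ 0 := Nat.cast_ne_zero.mpr (Nat.factorial_ne_zero _)
      have h21 : ((2 * d + 1).factorial : ℚ) ≠ 0 := Nat.cast_ne_zero.mpr (Nat.factorial_ne_zero _)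
      rw [f1, f2]
      simp only [Nat.factorial_zero, Nat.factorial_one, pow_succ]
      push_cast
      field_simp
      ring
    · obtain ⟨i, rfl⟩ : ∃ i, j = i + 1 := ⟨j - 1, by omega⟩
      rw [besselb_of_le (by omega) (by omega), besselb_of_le (by omega) (by omega),
        besselb_of_le (by omega) (by omega)]
      have e1 : i + 1 + d + 1 + 1 - (i + 1 + 1) = d + 1 := by omega
      have e2 : 2 * (i + 1 + d + 1 + 1) - (i + 1 + 1) - 1 = i + 2 * d + 3 := by omega
      have e3 : i + 1 + 1 - 1 = i + 1 := by omega
      have e4 : i + 1 + d + 1 + 1 - (i + 1 + 2) = d := by omega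
      have e5 : 2 * (i + 1 + d + 1 + 1) - (i + 1 + 2) - 1 = i + 2 * d + 2 := by omega
      have e6 : i + 1 + 2 - 1 = i + 2 := by omega
      have e7 : i + 1 + d + 1 - (i + 1) = d + 1 := by omega
      have e8 : 2 * (i + 1 + d + 1) - (i + 1) - 1 = i + 2 * d + 2 := by omega
      have e9 : i + 1 - 1 = i := by omega
      rw [e1, e2, e3, e4, e5, e6, e7, e8, e9]
      have f1 : ((i + 2 * d + 3).factorial : ℚ) = (i + 2 * d + 3) * (i + 2 * d + 2).factorial := by
        rw [Nat.factorial_succ]; push_cast; ring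
      have f2 : ((d + 1).factorial : ℚ) = (d + 1) * d.factorial := by
        rw [Nat.factorial_succ]; push_cast; ring
      have f3 : ((i + 2).factorial : ℚ) = (i + 2) * (i + 1).factorial := by
        rw [Nat.factorial_succ]; push_cast; ring
      have f4 : ((i + 1).factorial : ℚ) = (i + 1) * i.factorial := by
        rw [Nat.factorial_succ]; push_cast; ring
      have hd : (d.factorial : ℚ) ≠ 0 := Nat.cast_ne_zero.mpr (Nat.factorial_ne_zero _)
      have hi : (i.factorial : ℚ) ≠ 0 := Nat.cast_ne_zero.mpr (Nat.factorial_ne_zero _)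
      have h2 : ((i + 2 * d + 2).factorial : ℚ) ≠ 0 := Nat.cast_ne_zero.mpr (Nat.factorial_ne_zero _)
      rw [f1, f2, f3, f4]
      simp only [pow_succ]
      push_cast
      field_simp
      ring


lemma besselB_zero_zero : besselB 0 0 = 1 := by
  rw [besselB]
  letI : Unique {P : Finset (Finset (Fin 0)) //
      (∀ b ∈ P, b.card = 1 ∨ b.card = 2) ∧
      (∀ i : Fin 0, ∃! b, b ∈ P ∧ i ∈ b) ∧ P.card = 0} :=
    { default := ⟨∅, by simp, fun i => i.elim0, by simp⟩
      uniq := by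
        rintro ⟨P, h1, h2, h3⟩
        apply Subtype.ext
        exact Finset.card_eq_zero.mp h3 }
  exact Nat.card_unique

lemma besselB_zero_succ (l : ℕ) : besselB 0 (l + 1) = 0 := by
  rw [besselB]
  haveI : IsEmpty {P : Finset (Finset (Fin 0)) //
      (∀ b ∈ P, b.card = 1 ∨ b.card = 2) ∧
      (∀ i : Fin 0, ∃! b, b ∈ P ∧ i ∈ b) ∧ P.card = l + 1} := by
    constructor
    rintro ⟨P, h1, h2, h3⟩
    have : P.Nonempty := Finset.card_pos.mp (by omega)
    obtain ⟨b, hb⟩ := this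
    have : b.Nonempty := Finset.card_pos.mp (by rcases h1 b hb with h | h <;> omega)
    obtain ⟨i, _⟩ := this
    exact i.elim0
  exact Nat.card_of_isEmpty

lemma besselB_succ_zero (n : ℕ) : besselB (n + 1) 0 = 0 := by
  rw [besselB]
  haveI : IsEmpty {P : Finset (Finset (Fin (n+1))) //
      (∀ b ∈ P, b.card = 1 ∨ b.card = 2) ∧
      (∀ i : Fin (n+1), ∃! b, b ∈ P ∧ i ∈ b) ∧ P.card = 0} := by
    constructor
    rintro ⟨P, h1, h2, h3⟩
    obtain ⟨b, ⟨hb, _⟩, -⟩ := h2 0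
    rw [Finset.card_eq_zero.mp h3] at hb
    exact absurd hb (Finset.notMem_empty b)
  exact Nat.card_of_isEmpty

/-- Second inverse formula: `Σ_{k=0}^n b(n,k) B(k,l) = δ_{n,l}`. -/
theorem stmt_8 (n l : ℕ) :
    ∑ k ∈ Finset.range (n + 1), besselb n k * (besselB k l : ℚ) =
      if n = l then 1 else 0 := by
  induction n generalizing l with
  | zero =>
    rw [zero_add, Finset.sum_range_one]
    have : besselb 0 0 = 1 := by norm_num [besselb]
    rw [this, one_mul]
    cases l with
    | zero => rw [besselB_zero_zero]; norm_num
    | succ l => rw [besselB_zero_succ]; norm_num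
  | succ n ih =>
    cases l with
    | zero =>
      rw [Finset.sum_eq_single 0]
      · rw [besselb_zero_right (by omega), zero_mul]
        simp
      · intro k _ hk
        obtain ⟨t, rfl⟩ : ∃ t, k = t + 1 := ⟨k - 1, by omega⟩
        rw [besselB_succ_zero]
        norm_num
      · intro h
        exact absurd (Finset.mem_range.mpr (by omega)) h
    | succ l =>
      rw [Finset.sum_range_succ']
      have hb0 : besselB 0 (l + 1) = 0 := besselB_zero_succ l
      rw [hb0]
      push_cast
      rw [mul_zero, add_zero]
      have step : ∀ j, besselb (n + 1) (j + 1) * ((besselB (j + 1) (l + 1) : ℕ) : ℚ)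
          = besselb (n + 1) (j + 1) * (besselB j l : ℚ)
            + besselb (n + 1) (j + 1) * ((j : ℚ) * (besselB (j - 1) l : ℚ)) := by
        intro j
        rw [besselB_rec j l]
        push_cast
        ring
      rw [Finset.sum_congr rfl (fun j _ => step j), Finset.sum_add_distrib]
      have second : ∑ j ∈ Finset.range (n + 1),
          besselb (n + 1) (j + 1) * ((j : ℚ) * (besselB (j - 1) l : ℚ))
          = ∑ j ∈ Finset.range (n + 1),
            ((j : ℚ) + 1) * besselb (n + 1) (j + 2) * (besselB j l : ℚ) := by
        rw [Finset.sum_range_succ']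
        simp only [Nat.cast_zero, zero_mul, mul_zero, add_zero]
        rw [Finset.sum_range_succ]
        have : besselb (n + 1) (n + 2) = 0 := besselb_of_gt (by omega)
        rw [this]
        push_cast
        rw [mul_zero, zero_mul, add_zero]
        apply Finset.sum_congr rfl
        intro j _
        push_cast [Nat.succ_sub_one]
        ring
      rw [second, ← Finset.sum_add_distrib]
      have combine : ∀ j ∈ Finset.range (n + 1),
          besselb (n + 1) (j + 1) * (besselB j l : ℚ)
            + ((j : ℚ) + 1) * besselb (n + 1) (j + 2) * (besselB j l : ℚ)
          = besselb n j * (besselB j l : ℚ) := by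
        intro j _
        rw [← besselb_rec n j]
        push_cast
        ring
      rw [Finset.sum_congr rfl combine, ih l]
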